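/- arXiv:2309.07031 — 3 statements merged into one kernel-verified Lean document; each statement's English description precedes it below -/
import Mathlib

section
/- Let p ≥ 1, ω := p + 1 − ⌈p⌉, and let (X_i^{(n)})_{i∈T_n} be random fields with α-mixing coefficients (α_{ℓ,n}). Suppose α_{ℓ,n} ≤ C ℓ^{−v} for all ℓ, n, for constants (independent of n) C > 0, r > p + 2, and v > (d(p+2) + 2(1−ω)) r / (2(r−p−2)). Set u := (r−p−2)v/r − 1 + ω. Then for any ε > 0: M_n = O(|T_n|^{−βp}) with β = 1/2 if u > d(p+1); β = 1/2 − ε if u = d(p+1); and β = 1/2 − ((p+1)/p − u/(dp)) if d(p+2)/2 < u < d(p+1). -/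
open MeasureTheory ProbabilityTheory Filter

noncomputable section

namespace Paper

variable {Ω : Type*} [MeasurableSpace Ω]

/-- The α-mixing coefficient between two sub-σ-algebras of a probability space. -/
def alphaSigma (μ : Measure Ω) (m₁ m₂ : MeasurableSpace Ω) : ℝ :=
  sSup {x : ℝ | ∃ A B : Set Ω, MeasurableSet[m₁] A ∧ MeasurableSet[m₂] B ∧
    x = |(μ (A ∩ B)).toReal - (μ A).toReal * (μ B).toReal|}

/-- The σ-algebra generated by the random variables `X i`, `i ∈ U`. -/
def genSigma {d : ℕ} (X : (Fin d → ℤ) → Ω → ℝ) (U : Finset (Fin d → ℤ)) :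
    MeasurableSpace Ω :=
  ⨆ i ∈ U, MeasurableSpace.comap (X i) inferInstance

/-- Maximum-norm distance between two points of `ℤ^d`. -/
def zdist {d : ℕ} (i j : Fin d → ℤ) : ℕ :=
  Finset.univ.sup fun t => (i t - j t).natAbs

/-- The α-mixing coefficient `α_ℓ^{[k]}` of the random field `(X i)_{i ∈ T}`. -/
def fieldAlpha (μ : Measure Ω) {d : ℕ} (X : (Fin d → ℤ) → Ω → ℝ)
    (T : Finset (Fin d → ℤ)) (k ℓ : ℕ) : ℝ :=
  max 0 (sSup {x : ℝ | ∃ U₁ U₂ : Finset (Fin d → ℤ), U₁ ⊆ T ∧ U₂ ⊆ T ∧ U₁.card ≤ k ∧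
    (∀ i ∈ U₁, ∀ j ∈ U₂, ℓ ≤ zdist i j) ∧
    x = alphaSigma μ (genSigma X U₁) (genSigma X U₂)})

/-- The `n`-th moment `E[X^n]`. -/
def mom (μ : Measure Ω) (X : Ω → ℝ) (n : ℕ) : ℝ := ∫ ω, X ω ^ n ∂μ

/-- Cumulants, defined through the classical moment–cumulant recursion
`μ_n = ∑_{j=1}^n C(n-1, j-1) κ_j μ_{n-j}` (with `μ_0 = 1`). -/
def cumulant (μ : Measure Ω) (X : Ω → ℝ) : ℕ → ℝ
  | 0 => 0
  | n + 1 =>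
      mom μ X (n + 1) -
        ∑ j ∈ (Finset.range n).attach,
          (n.choose j.1 : ℝ) * cumulant μ X (j.1 + 1) * mom μ X (n - j.1)
  termination_by n => n
  decreasing_by
    have := Finset.mem_range.mp j.2
    omega

/-- The standard normal distribution `N(0,1)`. -/
def stdGaussian : Measure ℝ := gaussianReal 0 1

/-- `𝒩 h`, the expectation of `h` under the standard normal distribution. -/
def gaussMean (h : ℝ → ℝ) : ℝ := ∫ x, h x ∂stdGaussian

/-- `Θ h`, the solution of Stein's equation `x f(x) - f'(x) = 𝒩h - h(x)`. -/
def steinSol (h : ℝ → ℝ) : ℝ → ℝ := fun x =>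
  Real.exp (x ^ 2 / 2) * ∫ t in Set.Iio x, (h t - gaussMean h) * Real.exp (-t ^ 2 / 2)

/-- The composition `(∂^{s₁+1}Θ) ∘ (∂^{s₂+1}Θ) ∘ ⋯ ∘ (∂^{s_r+1}Θ) h`
for `L = [s₁, …, s_r]`. -/
def steinChain (L : List ℕ) (h : ℝ → ℝ) : ℝ → ℝ :=
  L.foldr (fun s g => iteratedDeriv (s + 1) (steinSol g)) h

/-- The cumulant-based Edgeworth expansion
`∑_{(r,s)∈Γ(k)} (-1)^r ∏_j κ_{s_j+2}(Y)/(s_j+1)! ⋅ 𝒩[(∂^{s₁+1}Θ)∘⋯∘(∂^{s_r+1}Θ) h]`,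
where `Γ(k)` consists of all tuples of positive integers with total sum at most `k`. -/
def edgeworthSum (μ : Measure Ω) (Y : Ω → ℝ) (k : ℕ) (h : ℝ → ℝ) : ℝ :=
  ∑ m ∈ Finset.Icc 1 k, ∑ c : Composition m,
    (-1 : ℝ) ^ c.length *
      (c.blocks.map fun s => cumulant μ Y (s + 2) / (Nat.factorial (s + 1) : ℝ)).prod *
      gaussMean (steinChain c.blocks h)

/-- The set of Hölder quotients of the `k`-th derivative of `f`. -/
def holderSet (k : ℕ) (ω : ℝ) (f : ℝ → ℝ) : Set ℝ :=
  {c : ℝ | ∃ x y : ℝ, x ≠ y ∧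
    c = |iteratedDeriv k f x - iteratedDeriv k f y| / |x - y| ^ ω}

/-- The Hölder coefficient `|f|_{k,ω}`. -/
def holderCoef (k : ℕ) (ω : ℝ) (f : ℝ → ℝ) : ℝ := sSup (holderSet k ω f)

/-- Membership in the Hölder space `C^{k,ω}(ℝ)`. -/
def HolderSmooth (k : ℕ) (ω : ℝ) (f : ℝ → ℝ) : Prop :=
  ContDiff ℝ k f ∧ BddAbove (holderSet k ω f)

/-- The class `Λ_p` of Hölder smooth functions with `|f|_{⌈p⌉-1,ω} ≤ 1`,
`ω = p + 1 - ⌈p⌉`. -/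
def LambdaP (p : ℝ) (f : ℝ → ℝ) : Prop :=
  HolderSmooth (⌈p⌉₊ - 1) (p + 1 - (⌈p⌉₊ : ℝ)) f ∧
    holderCoef (⌈p⌉₊ - 1) (p + 1 - (⌈p⌉₊ : ℝ)) f ≤ 1

/-- `γ` is a coupling of `ν₁` and `ν₂`. -/
def IsCoupling (γ : Measure (ℝ × ℝ)) (ν₁ ν₂ : Measure ℝ) : Prop :=
  γ.map Prod.fst = ν₁ ∧ γ.map Prod.snd = ν₂

/-- The Wasserstein-`p` distance between two probability measures on `ℝ`. -/
def wassersteinDist (p : ℝ) (ν₁ ν₂ : Measure ℝ) : ℝ :=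
  sInf {x : ℝ | ∃ γ : Measure (ℝ × ℝ), IsProbabilityMeasure γ ∧ IsCoupling γ ν₁ ν₂ ∧
    x = (∫ z, |z.1 - z.2| ^ p ∂γ) ^ (1 / p)}

variable {d : ℕ}

/-- The sum `∑_{i ∈ T_n} X_i^{(n)}`. -/
def fieldSum (T : ℕ → Finset (Fin d → ℤ)) (X : ℕ → (Fin d → ℤ) → Ω → ℝ) (n : ℕ) :
    Ω → ℝ := fun ω => ∑ i ∈ T n, X n i ω

/-- `σ_n² = Var(∑_{i ∈ T_n} X_i^{(n)})`. -/
def sigma2 (μ : Measure Ω) (T : ℕ → Finset (Fin d → ℤ))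
    (X : ℕ → (Fin d → ℤ) → Ω → ℝ) (n : ℕ) : ℝ :=
  variance (fieldSum T X n) μ

/-- The rescaled average `W_n = σ_n⁻¹ ∑_{i ∈ T_n} X_i^{(n)}`. -/
def Wfield (μ : Measure Ω) (T : ℕ → Finset (Fin d → ℤ))
    (X : ℕ → (Fin d → ℤ) → Ω → ℝ) (n : ℕ) : Ω → ℝ :=
  fun ω => fieldSum T X n ω / Real.sqrt (sigma2 μ T X n)

/-- The non-degeneracy condition `0 < liminf σ_n²/|T_n| < ∞`. -/
def Nondeg (μ : Measure Ω) (T : ℕ → Finset (Fin d → ℤ))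
    (X : ℕ → (Fin d → ℤ) → Ω → ℝ) : Prop :=
  0 < Filter.liminf (fun n => ENNReal.ofReal (sigma2 μ T X n / (T n).card)) atTop ∧
    Filter.liminf (fun n => ENNReal.ofReal (sigma2 μ T X n / (T n).card)) atTop < ⊤

/-- The uniform moment condition `sup_{n, i ∈ T_n} E[|X_i^{(n)}|^r] < ∞`. -/
def MomentCond (μ : Measure Ω) (T : ℕ → Finset (Fin d → ℤ))
    (X : ℕ → (Fin d → ℤ) → Ω → ℝ) (r : ℝ) : Prop :=
  ∃ M : ℝ, ∀ n : ℕ, ∀ i ∈ T n,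
    (∫⁻ ω, ENNReal.ofReal (|X n i ω| ^ r) ∂μ) ≤ ENNReal.ofReal M

/-- The field consists of measurable, integrable, mean-zero random variables. -/
def MeanZero (μ : Measure Ω) (T : ℕ → Finset (Fin d → ℤ))
    (X : ℕ → (Fin d → ℤ) → Ω → ℝ) : Prop :=
  (∀ n i, Measurable (X n i)) ∧
    ∀ n : ℕ, ∀ i ∈ T n, Integrable (X n i) μ ∧ ∫ ω, X n i ω ∂μ = 0

/-- The index sets are nested and `|T_n| → ∞`. -/
def Growing (T : ℕ → Finset (Fin d → ℤ)) : Prop :=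
  (∀ n, T n ⊆ T (n + 1)) ∧ Tendsto (fun n => (T n).card) atTop atTop

/-- `sup_n ∑_{ℓ=1}^∞ ℓ^{d-1} α_{ℓ,n}^e < ∞`, expressed through uniformly bounded
partial sums. -/
def MixSumBound (μ : Measure Ω) (T : ℕ → Finset (Fin d → ℤ))
    (X : ℕ → (Fin d → ℤ) → Ω → ℝ) (k : ℕ) (e : ℝ) : Prop :=
  ∃ L : ℝ, ∀ n N : ℕ,
    ∑ ℓ ∈ Finset.Icc 1 N,
      (ℓ : ℝ) ^ (d - 1) * fieldAlpha μ (X n) (T n) k ℓ ^ e ≤ L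

/-- The quantity `M_n` of the paper. -/
def Mseq (μ : Measure Ω) (T : ℕ → Finset (Fin d → ℤ))
    (X : ℕ → (Fin d → ℤ) → Ω → ℝ) (p r : ℝ) (n : ℕ) : ℝ :=
  ((T n).card : ℝ) ^ (-(p / 2)) *
    ∑ ℓ ∈ Finset.Icc 1 (⌊((T n).card : ℝ) ^ ((d : ℝ)⁻¹)⌋₊),
      (ℓ : ℝ) ^ ((d : ℝ) * (p + 1) - (p + 1 - (⌈p⌉₊ : ℝ))) *
        fieldAlpha μ (X n) (T n) (⌈p⌉₊ + 1) ℓ ^ ((r - p - 2) / r)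

/-- The quantity `M^{(i)}_{n,m,δ}` of the paper (with σ-algebra size parameter `k`). -/
def MseqI (μ : Measure Ω) (T : ℕ → Finset (Fin d → ℤ))
    (X : ℕ → (Fin d → ℤ) → Ω → ℝ) (p : ℕ) (r δ : ℝ) (k m n : ℕ) : ℝ :=
  ((T n).card : ℝ) ^ (-(((p : ℝ) - 1 + δ) / 2)) * (m : ℝ) ^ (d * p) *
    ∑ ℓ ∈ Finset.Icc (m + 1) (m + 1 + ⌊((T n).card : ℝ) ^ ((d : ℝ)⁻¹) / 2⌋₊),
      (ℓ : ℝ) ^ ((d : ℝ) * δ - δ) *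
        fieldAlpha μ (X n) (T n) k ℓ ^ ((r - p - 1 - δ) / r)

/-- The quantity `M^{(ii)}_{n,m}` of the paper (with σ-algebra size parameter `k`). -/
def MseqII (μ : Measure Ω) (T : ℕ → Finset (Fin d → ℤ))
    (X : ℕ → (Fin d → ℤ) → Ω → ℝ) (p : ℕ) (r : ℝ) (k m n : ℕ) : ℝ :=
  ((T n).card : ℝ) ^ (-(((p : ℝ) - 1) / 2)) * (m : ℝ) ^ (d * p) *
    ∑ ℓ ∈ Finset.Icc (m + 1) (m + 1 + ⌊((T n).card : ℝ) ^ ((d : ℝ)⁻¹) / 2⌋₊),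
      (ℓ : ℝ) ^ (d * p - 1) *
        fieldAlpha μ (X n) (T n) k ℓ ^ ((r - p - 1) / r)

open Classical in
/-- The piecewise exponent `β` (five cases) in terms of `u`. -/
def betaOf (d p : ℕ) (u ε : ℝ) : ℝ :=
  if (d : ℝ) * (p + 1) < u then 1 / 2
  else if u = (d : ℝ) * (p + 1) then 1 / 2 - ε
  else if (d : ℝ) * p < u then
    1 / 2 - min ((p + 1) / p - u / (d * p)) ((d : ℝ) / (u + d * p))
  else if u = (d : ℝ) * p then 1 / 2 - (1 / (2 * p) + ε)
  else 1 / 2 - ((2 * p + 1) / (2 * p) - u / (d * p))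

open Classical in
/-- The piecewise exponent `β` (three cases) in terms of `u`. -/
def betaOf2 (d : ℕ) (p u ε : ℝ) : ℝ :=
  if (d : ℝ) * (p + 1) < u then 1 / 2
  else if u = (d : ℝ) * (p + 1) then 1 / 2 - ε
  else 1 / 2 - ((p + 1) / p - u / (d * p))

/-- Stationarity of a random field indexed by `ℤ^d`: all joint distributions are
invariant under translations of the index. -/
def Stationary (μ : Measure Ω) {d : ℕ} (Y : (Fin d → ℤ) → Ω → ℝ) : Prop :=
  ∀ (v : Fin d → ℤ) (k : ℕ) (idx : Fin k → (Fin d → ℤ)),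
    μ.map (fun ω j => Y (idx j) ω) = μ.map (fun ω j => Y (idx j + v) ω)

end Paper

/-
Since `α_{ℓ,n} ≤ C ℓ^{-v}`, every summand of `M_n` is at most `C^e ℓ^{b-1}` with
`e = (r-p-2)/r` and `b = d(p+1) - u`, so `|T_n|^{p/2} M_n` is bounded by the partial sum
`∑_{ℓ ≤ N} ℓ^{b-1}` with `N = ⌊|T_n|^{1/d}⌋`. This sum is bounded by the convergent series when
`b < 0`, and is `O(N^c) = O(|T_n|^{c/d})` for every `c > 0` with `b ≤ c`: for `c ≤ 1`,
Bernoulli's inequality gives `c ℓ^{c-1} ≤ ℓ^c - (ℓ-1)^c`, which telescopes. Taking `c = dpε`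
when `b = 0` and `c = b` when `b > 0` gives the three exponents.
-/
theorem Real.mul_rpow_sub_one_le_rpow_sub_rpow {c x : ℝ} (hc0 : 0 ≤ c) (hc1 : c ≤ 1)
    (hx : 1 ≤ x) : c * x ^ (c - 1) ≤ x ^ c - (x - 1) ^ c := by
  have hx0 : 0 < x := by linarith
  have hinv : x⁻¹ ≤ 1 := inv_le_one_of_one_le₀ hx
  have bernoulli : (1 + -x⁻¹) ^ c ≤ 1 + c * -x⁻¹ :=
    rpow_one_add_le_one_add_mul_self (by linarith) hc0 hc1
  have hsplit : (x - 1) ^ c = x ^ c * (1 + -x⁻¹) ^ c := by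
    rw [← Real.mul_rpow hx0.le (by linarith)]
    congr 1
    field_simp
    ring
  calc c * x ^ (c - 1) = x ^ c - x ^ c * (1 + c * -x⁻¹) := by
        rw [Real.rpow_sub_one hx0.ne']
        ring
    _ ≤ x ^ c - (x - 1) ^ c := by
        rw [hsplit]
        gcongr

theorem sum_Icc_rpow_sub_one_le_rpow_div {c : ℝ} (hc0 : 0 < c) (hc1 : c ≤ 1) (N : ℕ) :
    ∑ ℓ ∈ Finset.Icc 1 N, (ℓ : ℝ) ^ (c - 1) ≤ (N : ℝ) ^ c / c := by
  induction N with
  | zero => simp [Real.zero_rpow hc0.ne']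
  | succ N ih =>
    rw [Finset.sum_Icc_succ_top (by omega)]
    have step := Real.mul_rpow_sub_one_le_rpow_sub_rpow hc0.le hc1 (x := (N + 1 : ℕ))
      (by exact_mod_cast Nat.le_add_left 1 N)
    push_cast at step ⊢
    rw [add_sub_cancel_right] at step
    calc _ ≤ (N : ℝ) ^ c / c + (N + 1 : ℝ) ^ (c - 1) := by gcongr
      _ ≤ (N + 1 : ℝ) ^ c / c := by
        rw [le_div_iff₀ hc0, add_mul, div_mul_cancel₀ _ hc0.ne']
        linarith

theorem sum_Icc_rpow_sub_one_le_mul_rpow {b c : ℝ} (hc : 0 < c) (hbc : b ≤ c) (N : ℕ) :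
    ∑ ℓ ∈ Finset.Icc 1 N, (ℓ : ℝ) ^ (b - 1) ≤ max c⁻¹ 1 * (N : ℝ) ^ c := by
  have hmono : ∑ ℓ ∈ Finset.Icc 1 N, (ℓ : ℝ) ^ (b - 1) ≤
      ∑ ℓ ∈ Finset.Icc 1 N, (ℓ : ℝ) ^ (c - 1) :=
    Finset.sum_le_sum fun ℓ hℓ => Real.rpow_le_rpow_of_exponent_le
      (by exact_mod_cast (Finset.mem_Icc.1 hℓ).1) (by linarith)
  refine hmono.trans ?_
  rcases le_or_gt c 1 with hc1 | hc1
  · calc _ ≤ (N : ℝ) ^ c / c := sum_Icc_rpow_sub_one_le_rpow_div hc hc1 N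
      _ ≤ max c⁻¹ 1 * (N : ℝ) ^ c := by
        rw [div_eq_inv_mul]
        gcongr
        exact le_max_left _ _
  · calc _ ≤ ∑ _ℓ ∈ Finset.Icc 1 N, (N : ℝ) ^ (c - 1) :=
          Finset.sum_le_sum fun ℓ hℓ => Real.rpow_le_rpow (by positivity)
            (by exact_mod_cast (Finset.mem_Icc.1 hℓ).2) (by linarith)
      _ = (N : ℝ) ^ c := by
          rcases N.eq_zero_or_pos with rfl | hN
          · simp [Real.zero_rpow hc.ne']
          rw [Finset.sum_const, Nat.card_Icc, nsmul_eq_mul, Nat.add_sub_cancel,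
            Real.rpow_sub_one (by positivity), mul_div_cancel₀ _ (by positivity)]
      _ ≤ max c⁻¹ 1 * (N : ℝ) ^ c := le_mul_of_one_le_left (by positivity) (le_max_right _ _)

theorem rpow_mul_rpow_le_of_le_mul_rpow {ℓ a C v s e : ℝ} (hℓ : 0 < ℓ) (ha : 0 ≤ a)
    (hC : 0 ≤ C) (he : 0 ≤ e) (haC : a ≤ C * ℓ ^ (-v)) :
    ℓ ^ s * a ^ e ≤ C ^ e * ℓ ^ (s - v * e) := by
  calc ℓ ^ s * a ^ e ≤ ℓ ^ s * (C * ℓ ^ (-v)) ^ e := by gcongr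
    _ = C ^ e * ℓ ^ (s - v * e) := by
      rw [Real.mul_rpow hC (by positivity), ← Real.rpow_mul hℓ.le, mul_left_comm,
        ← Real.rpow_add hℓ, sub_eq_add_neg, neg_mul]

namespace Paper

open Finset

variable {Ω : Type*} [MeasurableSpace Ω] {d : ℕ}

theorem fieldAlpha_nonneg (μ : Measure Ω) (X : (Fin d → ℤ) → Ω → ℝ)
    (T : Finset (Fin d → ℤ)) (k ℓ : ℕ) : 0 ≤ fieldAlpha μ X T k ℓ :=
  le_max_left _ _

theorem Mseq_nonneg (μ : Measure Ω) (T : ℕ → Finset (Fin d → ℤ))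
    (X : ℕ → (Fin d → ℤ) → Ω → ℝ) (p r : ℝ) (n : ℕ) : 0 ≤ Mseq μ T X p r n :=
  mul_nonneg (by positivity) <| sum_nonneg fun _ _ =>
    mul_nonneg (by positivity) (Real.rpow_nonneg (fieldAlpha_nonneg ..) _)

section PolynomialMixing

variable (μ : Measure Ω) (T : ℕ → Finset (Fin d → ℤ)) (X : ℕ → (Fin d → ℤ) → Ω → ℝ)
  {p r C v : ℝ} (n : ℕ)

theorem Mseq_le_mul_sum (hC : 0 ≤ C) (he : 0 ≤ (r - p - 2) / r)
    (hα : ∀ ℓ : ℕ, 1 ≤ ℓ → fieldAlpha μ (X n) (T n) (⌈p⌉₊ + 1) ℓ ≤ C * (ℓ : ℝ) ^ (-v)) :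
    Mseq μ T X p r n ≤ C ^ ((r - p - 2) / r) * ((T n).card : ℝ) ^ (-(p / 2)) *
      ∑ ℓ ∈ Icc 1 ⌊((T n).card : ℝ) ^ ((d : ℝ)⁻¹)⌋₊,
        (ℓ : ℝ) ^ ((d : ℝ) * (p + 1) - ((r - p - 2) * v / r - 1 + (p + 1 - (⌈p⌉₊ : ℝ))) - 1) := by
  rw [Mseq, mul_comm (C ^ _), mul_assoc]
  gcongr
  rw [mul_sum]
  refine sum_le_sum fun ℓ hℓ => ?_
  have hℓ1 : 1 ≤ ℓ := (mem_Icc.1 hℓ).1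
  refine (rpow_mul_rpow_le_of_le_mul_rpow (by positivity) (fieldAlpha_nonneg ..) hC he
    (hα ℓ hℓ1)).trans_eq ?_
  congr 2
  ring

theorem abs_Mseq_le_of_sum_le (hC : 0 ≤ C) (he : 0 ≤ (r - p - 2) / r)
    (hα : ∀ ℓ : ℕ, 1 ≤ ℓ → fieldAlpha μ (X n) (T n) (⌈p⌉₊ + 1) ℓ ≤ C * (ℓ : ℝ) ^ (-v))
    {K c : ℝ} (hc : 0 ≤ c)
    (hK : ∀ N : ℕ, ∑ ℓ ∈ Icc 1 N,
      (ℓ : ℝ) ^ ((d : ℝ) * (p + 1) - ((r - p - 2) * v / r - 1 + (p + 1 - (⌈p⌉₊ : ℝ))) - 1) ≤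
        K * (N : ℝ) ^ c)
    (hn : 0 < (T n).card) :
    |Mseq μ T X p r n| ≤
      C ^ ((r - p - 2) / r) * K * ((T n).card : ℝ) ^ (-(p / 2) + c / d) := by
  set A : ℝ := ((T n).card : ℝ)
  have hA : 0 < A := Nat.cast_pos.2 hn
  have hK0 : 0 ≤ K := zero_le_one.trans (by simpa using hK 1)
  have hN : (⌊A ^ ((d : ℝ)⁻¹)⌋₊ : ℝ) ^ c ≤ A ^ (c / d) := by
    rw [div_eq_inv_mul, Real.rpow_mul hA.le]
    gcongr
    exact Nat.floor_le (by positivity)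
  rw [abs_of_nonneg (Mseq_nonneg ..), Real.rpow_add hA]
  calc Mseq μ T X p r n ≤ C ^ ((r - p - 2) / r) * A ^ (-(p / 2)) *
        (K * (⌊A ^ ((d : ℝ)⁻¹)⌋₊ : ℝ) ^ c) :=
        (Mseq_le_mul_sum μ T X n hC he hα).trans (by gcongr; exact hK _)
    _ ≤ C ^ ((r - p - 2) / r) * A ^ (-(p / 2)) * (K * A ^ (c / d)) := by gcongr
    _ = C ^ ((r - p - 2) / r) * K * (A ^ (-(p / 2)) * A ^ (c / d)) := by ring

end PolynomialMixing

theorem exists_sum_le_and_eq_betaOf2 (hd : 0 < d) {p ε : ℝ} (hp : 0 < p) (hε : 0 < ε)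
    (u : ℝ) : ∃ K c : ℝ, 0 ≤ c ∧
      (∀ N : ℕ, ∑ ℓ ∈ Icc 1 N, (ℓ : ℝ) ^ ((d : ℝ) * (p + 1) - u - 1) ≤ K * (N : ℝ) ^ c) ∧
      -(p / 2) + c / d = -(betaOf2 d p u ε * p) := by
  have hd' : (0 : ℝ) < d := by exact_mod_cast hd
  rw [betaOf2]
  split_ifs with hlt heq
  · refine ⟨∑' ℓ : ℕ, (ℓ : ℝ) ^ ((d : ℝ) * (p + 1) - u - 1), 0, le_rfl, fun N => ?_, by ring⟩
    rw [Real.rpow_zero, mul_one]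
    exact Summable.sum_le_tsum _ (fun _ _ => by positivity)
      (Real.summable_nat_rpow.2 (by linarith))
  · refine ⟨max (d * p * ε)⁻¹ 1, d * p * ε, by positivity,
      sum_Icc_rpow_sub_one_le_mul_rpow (by positivity) (by rw [heq, sub_self]; positivity), ?_⟩
    field_simp
    ring
  · have hb : 0 < (d : ℝ) * (p + 1) - u :=
      sub_pos.2 (lt_of_le_of_ne (not_lt.1 hlt) heq)
    refine ⟨max ((d : ℝ) * (p + 1) - u)⁻¹ 1, (d : ℝ) * (p + 1) - u, hb.le,
      sum_Icc_rpow_sub_one_le_mul_rpow hb le_rfl, ?_⟩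
    field_simp
    ring

theorem Mseq_polynomial_rate_general
    {Ω : Type*} [MeasurableSpace Ω] (μ : Measure Ω)
    {d : ℕ} (hd : 0 < d)
    (T : ℕ → Finset (Fin d → ℤ)) (X : ℕ → (Fin d → ℤ) → Ω → ℝ)
    (hT : Growing T)
    (p : ℝ) (hp : 1 ≤ p) (C r v : ℝ) (hC : 0 < C) (hr : p + 2 < r)
    (hα : ∀ n ℓ : ℕ, 1 ≤ ℓ →
      fieldAlpha μ (X n) (T n) (⌈p⌉₊ + 1) ℓ ≤ C * (ℓ : ℝ) ^ (-v)) :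
    ∀ ε > 0, ∃ K : ℝ, ∀ᶠ n in atTop,
      |Mseq μ T X p r n| ≤
        K * ((T n).card : ℝ) ^
          (-(betaOf2 d p ((r - p - 2) * v / r - 1 + (p + 1 - (⌈p⌉₊ : ℝ))) ε * p)) := by
  intro ε hε
  have he : 0 ≤ (r - p - 2) / r := div_nonneg (by linarith) (by linarith)
  obtain ⟨K, c, hc, hK, hβ⟩ :=
    exists_sum_le_and_eq_betaOf2 hd (by linarith : 0 < p) hε
      ((r - p - 2) * v / r - 1 + (p + 1 - (⌈p⌉₊ : ℝ)))
  refine ⟨C ^ ((r - p - 2) / r) * K, ?_⟩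
  filter_upwards [hT.2.eventually_gt_atTop 0] with n hn
  rw [← hβ]
  exact abs_Mseq_le_of_sum_le μ T X n hC.le he (hα n) hc hK hn

/-- Proposition 2.3 of the paper: decay rate of `M_n` when the
α-mixing coefficients decay polynomially. -/
theorem Mseq_polynomial_rate
    {Ω : Type*} [MeasurableSpace Ω] (μ : Measure Ω) [IsProbabilityMeasure μ]
    {d : ℕ} (hd : 0 < d)
    (T : ℕ → Finset (Fin d → ℤ)) (X : ℕ → (Fin d → ℤ) → Ω → ℝ)
    (hT : Growing T)
    (p : ℝ) (hp : 1 ≤ p) (C r v : ℝ) (hC : 0 < C) (hr : p + 2 < r)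
    (hv : ((d : ℝ) * (p + 2) + 2 * (1 - (p + 1 - (⌈p⌉₊ : ℝ)))) * r /
        (2 * (r - p - 2)) < v)
    (hα : ∀ n ℓ : ℕ, 1 ≤ ℓ →
      fieldAlpha μ (X n) (T n) (⌈p⌉₊ + 1) ℓ ≤ C * (ℓ : ℝ) ^ (-v)) :
    ∀ ε > 0, ∃ K : ℝ, ∀ᶠ n in atTop,
      |Mseq μ T X p r n| ≤
        K * ((T n).card : ℝ) ^
          (-(betaOf2 d p ((r - p - 2) * v / r - 1 + (p + 1 - (⌈p⌉₊ : ℝ))) ε * p)) :=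
  Mseq_polynomial_rate_general μ hd T X hT p hp C r v hC hr hα

end Paper

end
end

section
/- Let (V,E) be a rooted tree with vertex set V = {v[1],…,v[k]} whose labels satisfy the depth-first traversal property, i.e., p(j+1) = max{p(ℓ) : ℓ ≥ j+1, p(ℓ) ≤ j} for all 1 ≤ j ≤ k−1. Then for any 1 ≤ j ≤ k−1, either p(j+1) = j, or p(j+1) ∈ A(j) and v[j] is a leaf. -/
namespace Paper

/-- `i` is an ancestor of `j` in the rooted tree on `{1, …, k}` encoded by the
parent map `par` (each step goes from a non-root vertex to its parent). -/
def IsAncestor (par : ℕ → ℕ) (i j : ℕ) : Prop :=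
  Relation.TransGen (fun a b => 2 ≤ b ∧ par b = a) i j

/-- Lemma E.1 of the paper: in a rooted tree whose labels come
from a depth-first traversal, the parent of `v[j+1]` is either `v[j]` itself, or
an ancestor of `v[j]` while `v[j]` is a leaf. -/
theorem dfs_growing_vertex
    (k : ℕ) (hk : 1 ≤ k) (par : ℕ → ℕ)
    (hpar : ∀ j, 2 ≤ j → j ≤ k → 1 ≤ par j ∧ par j < j)
    (hdfs : ∀ j, 1 ≤ j → j < k →
      par (j + 1) = ((Finset.Icc (j + 1) k).filter fun ℓ => par ℓ ≤ j).sup par) :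
    ∀ j, 1 ≤ j → j < k →
      par (j + 1) = j ∨
        (IsAncestor par (par (j + 1)) j ∧ ∀ ℓ, 2 ≤ ℓ → ℓ ≤ k → par ℓ ≠ j) := by
  intro j hj1 hjk
  have hpj := hpar (j + 1) (by omega) (by omega)
  by_cases hmj : par (j + 1) = j
  · exact Or.inl hmj
  right
  have hmlt : par (j + 1) < j := by omega
  -- every vertex `a` with `par (j+1) < a ≤ j` has `par a ≥ par (j+1)`
  have key : ∀ a, par (j + 1) < a → a ≤ j → par (j + 1) ≤ par a := by
    intro a ha haj
    have hd := hdfs (a - 1) (by omega) (by omega)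
    have ha1 : a - 1 + 1 = a := by omega
    rw [ha1] at hd
    have hmem : (j + 1) ∈ (Finset.Icc a k).filter (fun ℓ => par ℓ ≤ a - 1) := by
      simp only [Finset.mem_filter, Finset.mem_Icc]
      omega
    have := Finset.le_sup (f := par) hmem
    omega
  have anc : ∀ a, par (j + 1) < a → a ≤ j → IsAncestor par (par (j + 1)) a := by
    intro a
    induction a using Nat.strong_induction_on with
    | _ a ih =>
      intro ha haj
      have hpa := hpar a (by omega) (by omega)
      have hkey := key a ha haj
      rcases eq_or_lt_of_le hkey with h | h
      · exact Relation.TransGen.single ⟨by omega, h.symm⟩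
      · exact (ih (par a) hpa.2 h (by omega)).tail ⟨by omega, rfl⟩
  refine ⟨anc j hmlt le_rfl, ?_⟩
  intro ℓ h2 hℓk hparℓ
  have hpℓ := hpar ℓ h2 hℓk
  have hd := hdfs j hj1 hjk
  have hmem : ℓ ∈ (Finset.Icc (j + 1) k).filter (fun ℓ => par ℓ ≤ j) := by
    simp only [Finset.mem_filter, Finset.mem_Icc]
    omega
  have := Finset.le_sup (f := par) hmem
  omega

end Paper
end

section
/- Let t ≥ 1 and let Y₁,…,Y_t be real random variables with E[|Y_i Y_{i+1} ⋯ Y_j|] < ∞ for all 1 ≤ i ≤ j ≤ t. Then 𝒟*(Y₁,…,Y_t) = Σ_{(ℓ,η₁,…,η_ℓ)∈C(t)} (−1)^{ℓ−1} [η₁,…,η_ℓ]▷(Y₁,…,Y_t), where C(t) is the set of all compositions of t; and 𝒟(Y₁,…,Y_t) = Y₁Y₂⋯Y_t − 𝒟*(Y₁,…,Y_t) − Σ_{j=1}^{t−1} Y₁⋯Y_j · 𝒟*(Y_{j+1},…,Y_t). -/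
/-!
Write `Π L` for the pointwise product of a list `L` of random variables. Unfolding the recursion
gives `𝒟 L = Π L - ∑_{j < |L|} Π (L.take j) · 𝒟* (L.drop j)`, whose `j = 0` term is `𝒟* L`;
this is the second claim. As `𝒟 L` is a variable minus its mean, `E[𝒟 L] = 0`, so taking
expectations yields `E[Π L] = ∑_{j < |L|} E[Π (L.take j)] · 𝒟* (L.drop j)`. This recursion
determines `𝒟*` on nonempty lists, and the alternating sum of block-products satisfies it as
well: splitting off the first block of a composition is exactly the recursion.
-/

open MeasureTheory

noncomputable section

namespace Paper

variable {Ω : Type*} [MeasurableSpace Ω]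

/-- The pointwise product of a list of random variables. -/
def listProd (L : List (Ω → ℝ)) : Ω → ℝ := fun ω => (L.map fun Y => Y ω).prod

/-- The operator `𝒟`, defined recursively by `𝒟(Y) = Y - E[Y]` and
`𝒟(Y₁,…,Y_t) = Y₁·𝒟(Y₂,…,Y_t) - E[Y₁·𝒟(Y₂,…,Y_t)]`. -/
def Dop (μ : Measure Ω) : List (Ω → ℝ) → Ω → ℝ
  | [] => fun _ => 0
  | [Y] => fun ω => Y ω - ∫ ω', Y ω' ∂μ
  | Y :: Ys => fun ω => Y ω * Dop μ Ys ω - ∫ ω', Y ω' * Dop μ Ys ω' ∂μ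

/-- The generalized covariance operator `𝒟*`, defined by `𝒟*(Y) = E[Y]` and
`𝒟*(Y₁,…,Y_t) = E[Y₁·𝒟(Y₂,…,Y_t)]`. -/
def Dstar (μ : Measure Ω) : List (Ω → ℝ) → ℝ
  | [] => 0
  | [Y] => ∫ ω, Y ω ∂μ
  | Y :: Ys => ∫ ω, Y ω * Dop μ Ys ω ∂μ

/-- The block-product `[η₁,…,η_ℓ] ▷ (Y₀,…,Y_{t-1})`: the product of the
expectations of the products of `Y` over the consecutive blocks of the
composition `c` of `t`. -/
def blockProd (μ : Measure Ω) {t : ℕ} (c : Composition t) (Y : ℕ → Ω → ℝ) : ℝ :=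
  ∏ i : Fin c.length, ∫ ω, ∏ j : Fin (c.blocksFun i), Y (c.embedding i j).val ω ∂μ

/-- The list obtained from `Y₀,…,Y_{t-1}` by multiplying the variables within
each block of the composition `c` of `t`. -/
def blockVars {t : ℕ} (c : Composition t) (Y : ℕ → Ω → ℝ) : List (Ω → ℝ) :=
  List.ofFn fun i : Fin c.length => fun ω =>
    ∏ j : Fin (c.blocksFun i), Y (c.embedding i j).val ω

end Paper

open Finset

theorem List.splitWrtComposition_ofFn {α : Type*} {n : ℕ} (g : Fin n → α) (c : Composition n) :
    (List.ofFn g).splitWrtComposition c = List.ofFn fun i => List.ofFn (g ∘ c.embedding i) := by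
  refine List.ext_getElem (by simp) fun i h₁ _ => ?_
  rw [getElem_splitWrtComposition]
  have hi : i < c.length := by simpa using h₁
  refine List.ext_getElem ?_ fun j _ _ => ?_
  · have hle := c.sizeUpTo_le (i + 1)
    have hsucc : c.sizeUpTo (i + 1) = c.sizeUpTo i + c.blocksFun ⟨i, hi⟩ :=
      c.sizeUpTo_succ' ⟨i, hi⟩
    simp only [List.length_drop, List.length_take, List.length_ofFn, List.getElem_ofFn]
    omega
  · simp only [List.getElem_drop, List.getElem_take, List.getElem_ofFn, Function.comp_apply]
    exact congrArg g (Fin.ext (by simp [Composition.coe_embedding]))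

namespace Composition

def consBlock {n : ℕ} (p : Σ k : Fin (n + 1), Composition (n - k)) : Composition (n + 1) where
  blocks := (p.1 + 1) :: p.2.blocks
  blocks_pos := by
    rintro i (_ | ⟨_, hi⟩)
    exacts [Nat.succ_pos _, p.2.blocks_pos hi]
  blocks_sum := by
    rw [List.sum_cons, p.2.blocks_sum]
    have := p.1.isLt
    omega

@[simp]
theorem length_consBlock {n : ℕ} (k : Fin (n + 1)) (c : Composition (n - k)) :
    (consBlock ⟨k, c⟩).length = c.length + 1 := rfl

theorem consBlock_bijective (n : ℕ) : Function.Bijective (consBlock (n := n)) := by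
  constructor
  · rintro ⟨j, c⟩ ⟨k, d⟩ h
    obtain ⟨hjk, hcd⟩ := List.cons.inj (congrArg Composition.blocks h)
    obtain rfl : j = k := Fin.ext (by simpa using hjk)
    obtain rfl : c = d := Composition.ext hcd
    rfl
  · rintro ⟨_ | ⟨a, l⟩, hpos, hsum⟩
    · simp at hsum
    · have ha : 0 < a := hpos List.mem_cons_self
      rw [List.sum_cons] at hsum
      refine ⟨⟨⟨a - 1, by omega⟩, ⟨l, fun hi => hpos (List.mem_cons_of_mem _ hi), ?_⟩⟩, ?_⟩
      · simp only
        omega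
      · ext1
        simp only [consBlock]
        congr 1
        omega

theorem sum_univ_succ {M : Type*} [AddCommMonoid M] (n : ℕ) (g : Composition (n + 1) → M) :
    ∑ c, g c = ∑ k : Fin (n + 1), ∑ c : Composition (n - k), g (consBlock ⟨k, c⟩) := by
  rw [← Fintype.sum_bijective _ (consBlock_bijective n) _ g fun _ => rfl, ← univ_sigma_univ,
    sum_sigma]

end Composition

@[simp]
theorem List.splitWrtComposition_consBlock {α : Type*} (l : List α) {n : ℕ} (k : Fin (n + 1))
    (c : Composition (n - k)) :
    l.splitWrtComposition (Composition.consBlock ⟨k, c⟩) =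
      l.take (k + 1) :: (l.drop (k + 1)).splitWrtComposition c :=
  splitWrtCompositionAux_cons _ _ _

section AlternatingBlockSum

variable {α R : Type*} [CommRing R]

def altBlockSum (f : List α → R) (n : ℕ) (l : List α) : R :=
  ∑ c : Composition n, (-1) ^ (c.length - 1) * ((l.splitWrtComposition c).map f).prod

theorem altBlockSum_succ (f : List α → R) (n : ℕ) (l : List α) :
    altBlockSum f (n + 1) l = f (l.take (n + 1)) -
      ∑ k ∈ range n, f (l.take (k + 1)) * altBlockSum f (n - k) (l.drop (k + 1)) := by
  set tailSum : ℕ → R := fun k => ∑ c : Composition (n - k),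
    (-1) ^ c.length * ((l.drop (k + 1)).splitWrtComposition c |>.map f).prod
  have hlast : tailSum n = 1 := by
    have hnil : ∀ c : Composition (n - n), c.blocks = [] := fun c => c.blocks_eq_nil.2 (by simp)
    simp [tailSum, Composition.length, List.splitWrtComposition, List.splitWrtCompositionAux,
      hnil, composition_card]
  have hsign : ∀ k ∈ range n, tailSum k = -altBlockSum f (n - k) (l.drop (k + 1)) := by
    intro k hk
    rw [altBlockSum, ← sum_neg_distrib]
    refine sum_congr rfl fun c _ => ?_
    have hc : c.length ≠ 0 := c.length_eq_zero.not.2 (by have := mem_range.1 hk; omega)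
    rw [← Nat.sub_add_cancel (Nat.one_le_iff_ne_zero.2 hc), pow_succ, Nat.add_sub_cancel]
    ring
  calc altBlockSum f (n + 1) l
      = ∑ k : Fin (n + 1), f (l.take (k + 1)) * tailSum k := by
        simp only [altBlockSum, Composition.sum_univ_succ, Composition.length_consBlock,
          List.splitWrtComposition_consBlock, List.map_cons, List.prod_cons, Nat.add_sub_cancel,
          tailSum, mul_sum]
        refine sum_congr rfl fun k _ => sum_congr rfl fun c _ => ?_
        ring
    _ = ∑ k ∈ range n, f (l.take (k + 1)) * tailSum k + f (l.take (n + 1)) * tailSum n := by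
        rw [Fin.sum_univ_castSucc]
        simp only [Fin.val_castSucc, Fin.val_last]
        rw [Fin.sum_univ_eq_sum_range (fun k => f (l.take (k + 1)) * tailSum k)]
    _ = _ := by
        rw [hlast, sum_congr rfl fun k hk => by rw [hsign k hk], mul_one]
        simp only [mul_neg, sum_neg_distrib]
        ring

end AlternatingBlockSum

namespace Paper

variable {Ω : Type*}

@[simp]
theorem listProd_nil : listProd ([] : List (Ω → ℝ)) = 1 := rfl

@[simp]
theorem listProd_cons (a : Ω → ℝ) (l : List (Ω → ℝ)) :
    listProd (a :: l) = a * listProd l := rfl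

theorem listProd_ofFn {n : ℕ} (g : Fin n → Ω → ℝ) :
    listProd (List.ofFn g) = fun ω => ∏ i, g i ω := by
  ext ω
  simp [listProd, List.map_ofFn, List.prod_ofFn]

theorem listProd_drop_take_ofFn (Y : ℕ → Ω → ℝ) (t i j : ℕ) :
    listProd (((List.ofFn fun k : Fin t => Y k).drop i).take j) =
      fun ω => ∏ k ∈ range (min j (t - i)), Y (i + k) ω := by
  have hslice : ((List.ofFn fun k : Fin t => Y k).drop i).take j =
      List.ofFn fun k : Fin (min j (t - i)) => Y (i + k) :=
    List.ext_getElem (by simp) fun k _ _ => by simp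
  rw [hslice, listProd_ofFn]
  ext ω
  exact Fin.prod_univ_eq_prod_range (fun k => Y (i + k) ω) _

section Expansion

variable [MeasurableSpace Ω] (μ : Measure Ω)

theorem Dop_cons (a : Ω → ℝ) {l : List (Ω → ℝ)} (hl : l ≠ []) :
    Dop μ (a :: l) = fun ω => a ω * Dop μ l ω - Dstar μ (a :: l) := by
  obtain ⟨b, l, rfl⟩ := List.exists_cons_of_ne_nil hl
  rfl

theorem Dop_eq_listProd_sub_sum {l : List (Ω → ℝ)} (hl : l ≠ []) :
    Dop μ l = fun ω => listProd l ω -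
      ∑ j ∈ range l.length, listProd (l.take j) ω * Dstar μ (l.drop j) := by
  induction l with
  | nil => exact absurd rfl hl
  | cons a l ih =>
    rcases eq_or_ne l [] with rfl | hl'
    · ext ω
      simp [Dop, Dstar]
    · ext ω
      rw [Dop_cons μ a hl', ih hl', List.length_cons, sum_range_succ']
      simp only [List.take_succ_cons, List.drop_succ_cons, List.take_zero, List.drop_zero,
        listProd_cons, listProd_nil, Pi.mul_apply, Pi.one_apply]
      rw [mul_sub, mul_sum]
      simp only [mul_assoc]
      ring

theorem integral_Dop [IsProbabilityMeasure μ] {l : List (Ω → ℝ)} (hl : l ≠ []) :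
    ∫ ω, Dop μ l ω ∂μ = 0 := by
  obtain ⟨a, l, rfl⟩ := List.exists_cons_of_ne_nil hl
  rcases eq_or_ne l [] with rfl | hl'
  · simpa [Dop, average_eq_integral] using integral_sub_average μ a
  · simpa [Dop_cons μ a hl', Dstar, average_eq_integral] using
      integral_sub_average μ fun ω => a ω * Dop μ l ω

theorem sum_integral_listProd_take_mul_Dstar [IsProbabilityMeasure μ] {l : List (Ω → ℝ)}
    (hl : l ≠ []) (hint : ∀ j, Integrable (listProd (l.take j)) μ) :
    ∑ j ∈ range l.length, (∫ ω, listProd (l.take j) ω ∂μ) * Dstar μ (l.drop j) =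
      ∫ ω, listProd l ω ∂μ := by
  have h := integral_Dop μ hl
  rw [Dop_eq_listProd_sub_sum μ hl, integral_sub (by simpa using hint l.length)
    (integrable_finsetSum _ fun j _ => (hint j).mul_const _),
    integral_finsetSum _ fun j _ => (hint j).mul_const _] at h
  simp only [integral_mul_const] at h
  linarith

theorem Dstar_eq_altBlockSum [IsProbabilityMeasure μ] (n : ℕ) {l : List (Ω → ℝ)}
    (hl : l.length = n + 1) (hint : ∀ i j, Integrable (listProd ((l.drop i).take j)) μ) :
    Dstar μ l = altBlockSum (fun m => ∫ ω, listProd m ω ∂μ) (n + 1) l := by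
  induction n using Nat.strong_induction_on generalizing l with
  | _ n ih =>
  have hrec := sum_integral_listProd_take_mul_Dstar μ
    (List.ne_nil_of_length_pos (by omega : 0 < l.length)) fun j => by simpa using hint 0 j
  have htails : ∀ k ∈ range n, Dstar μ (l.drop (k + 1)) =
      altBlockSum (fun m => ∫ ω, listProd m ω ∂μ) (n - k) (l.drop (k + 1)) := by
    intro k hk
    obtain ⟨m, hm⟩ : ∃ m, n - k = m + 1 := ⟨n - k - 1, by have := mem_range.1 hk; omega⟩
    rw [hm]
    exact ih m (by omega) (by rw [List.length_drop, hl]; omega) fun i j => by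
      simpa [List.drop_drop, add_comm] using hint (k + 1 + i) j
  rw [hl, sum_range_succ', sum_congr rfl fun k hk => by rw [htails k hk]] at hrec
  simp only [List.take_zero, List.drop_zero, listProd_nil, Pi.one_apply, integral_const,
    probReal_univ, smul_eq_mul, one_mul] at hrec
  rw [altBlockSum_succ, List.take_of_length_le hl.le]
  linarith

theorem integrable_listProd_drop_take_ofFn [IsFiniteMeasure μ] {Y : ℕ → Ω → ℝ}
    (hint : ∀ i j : ℕ, Integrable (fun ω => ∏ k ∈ Icc i j, Y k ω) μ) (t i j : ℕ) :
    Integrable (listProd (((List.ofFn fun k : Fin t => Y k).drop i).take j)) μ := by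
  rw [listProd_drop_take_ofFn]
  cases min j (t - i) with
  | zero => simp
  | succ m =>
    have h := hint i (i + m)
    simp only [← Ico_add_one_right_eq_Icc, prod_Ico_eq_prod_range] at h
    rwa [show i + m + 1 - i = m + 1 by omega] at h

theorem blockProd_eq_prod_map_splitWrtComposition {t : ℕ} (c : Composition t)
    (Y : ℕ → Ω → ℝ) :
    blockProd μ c Y = (((List.ofFn fun k : Fin t => Y k).splitWrtComposition c).map
      fun m => ∫ ω, listProd m ω ∂μ).prod := by
  simp [blockProd, List.splitWrtComposition_ofFn, List.map_ofFn, List.prod_ofFn, listProd_ofFn]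

end Expansion

theorem Dstar_Dop_expansion_general
    {Ω : Type*} [MeasurableSpace Ω] (μ : Measure Ω) [IsProbabilityMeasure μ]
    (t : ℕ) (ht : 1 ≤ t) (Y : ℕ → Ω → ℝ)
    (hint : ∀ i j : ℕ, Integrable (fun ω => ∏ k ∈ Finset.Icc i j, Y k ω) μ) :
    Dstar μ (List.ofFn fun i : Fin t => Y i.val) =
      (∑ c : Composition t, (-1 : ℝ) ^ (c.length - 1) * blockProd μ c Y) ∧
    Dop μ (List.ofFn fun i : Fin t => Y i.val) =
      fun ω => (∏ i ∈ Finset.range t, Y i ω) -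
        Dstar μ (List.ofFn fun i : Fin t => Y i.val) -
        ∑ j ∈ Finset.Ico 1 t, (∏ i ∈ Finset.range j, Y i ω) *
          Dstar μ ((List.ofFn fun i : Fin t => Y i.val).drop j) := by
  obtain ⟨n, rfl⟩ : ∃ n, t = n + 1 := ⟨t - 1, by omega⟩
  have hlen : (List.ofFn fun i : Fin (n + 1) => Y i.val).length = n + 1 := List.length_ofFn
  have hprefix : ∀ j ≤ n + 1, listProd ((List.ofFn fun i : Fin (n + 1) => Y i.val).take j) =
      fun ω => ∏ i ∈ range j, Y i ω := fun j hj => by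
    simpa [hj] using listProd_drop_take_ofFn Y (n + 1) 0 j
  refine ⟨?_, ?_⟩
  · rw [Dstar_eq_altBlockSum μ n hlen (integrable_listProd_drop_take_ofFn μ hint _), altBlockSum]
    simp only [blockProd_eq_prod_map_splitWrtComposition]
  · have hfull := hprefix (n + 1) le_rfl
    rw [List.take_of_length_le hlen.le] at hfull
    rw [Dop_eq_listProd_sub_sum μ (List.ne_nil_of_length_pos (by omega)), hlen]
    ext ω
    rw [sum_range_eq_add_Ico _ (by omega : 0 < n + 1),
      sum_congr rfl fun j hj => by rw [hprefix j (mem_Ico.1 hj).2.le]]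
    simp only [hfull, List.take_zero, List.drop_zero, listProd_nil, Pi.one_apply, one_mul]
    ring

/-- Lemma F.3 of the paper: the expansion of `𝒟*` as an
alternating sum of block-products over all compositions, and the expansion of
`𝒟` through partial products and `𝒟*` of tails. -/
theorem Dstar_Dop_expansion
    {Ω : Type*} [MeasurableSpace Ω] (μ : Measure Ω) [IsProbabilityMeasure μ]
    (t : ℕ) (ht : 1 ≤ t) (Y : ℕ → Ω → ℝ)
    (hmeas : ∀ i, Measurable (Y i))
    (hint : ∀ i j : ℕ, Integrable (fun ω => ∏ k ∈ Finset.Icc i j, Y k ω) μ) :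
    Dstar μ (List.ofFn fun i : Fin t => Y i.val) =
      (∑ c : Composition t, (-1 : ℝ) ^ (c.length - 1) * blockProd μ c Y) ∧
    Dop μ (List.ofFn fun i : Fin t => Y i.val) =
      fun ω => (∏ i ∈ Finset.range t, Y i ω) -
        Dstar μ (List.ofFn fun i : Fin t => Y i.val) -
        ∑ j ∈ Finset.Ico 1 t, (∏ i ∈ Finset.range j, Y i ω) *
          Dstar μ ((List.ofFn fun i : Fin t => Y i.val).drop j) :=
  Dstar_Dop_expansion_general μ t ht Y hint

end Paper

end
end
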